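/- Let (X,d,μ) be a space of homogeneous type satisfying the standing assumptions and 1 ≤ q ≤ α ≤ p ≤ ∞. Then there is a constant C > 0 such that for every r > 0 and every μ-measurable f on X, _r‖f‖_{q,p,α} ≤ C ‖f‖_{L^α}. Consequently, ‖f‖_{q,p,α} := sup_{r>0} _r‖f‖_{q,p,α} ≤ C‖f‖_{L^α}, i.e. L^α(X) embeds continuously into (L^q,L^p)^α(X). -/

import Mathlib

open MeasureTheory Set ENNReal Filter

noncomputable section

variable {X : Type*}

/-- Ball of a quasi-metric `d`, center `x`, radius `r`. -/
def qball (d : X → X → ℝ) (x : X) (r : ℝ) : Set X := {y | d x y < r}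

/-- The amalgam-type quantity `_r‖f‖_{q,p,α}` (with the convention `1/∞ = 0`
given by `ENNReal.toReal`). -/
def amalgamNorm [MeasurableSpace X] (μ : Measure X) (d : X → X → ℝ)
    (q p α : ℝ≥0∞) (r : ℝ) (f : X → ℂ) : ℝ≥0∞ :=
  if p = ∞ then
    ⨆ y : X, μ (qball d y r) ^ (1 / α.toReal - 1 / q.toReal) *
      eLpNorm ((qball d y r).indicator f) q μ
  else
    (∫⁻ y, (μ (qball d y r) ^ (1 / α.toReal - 1 / p.toReal - 1 / q.toReal) *
      eLpNorm ((qball d y r).indicator f) q μ) ^ p.toReal ∂μ) ^ (1 / p.toReal)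

/-!
Hölder's inequality on a ball `B` gives `μ B ^ (1/α - 1/q) ‖1_B f‖_q ≤ ‖1_B f‖_α ≤ ‖f‖_α`, which
settles `p = ∞`. For `p < ∞` it bounds the `p`-th power of the integrand at `y` by
`‖f‖_α ^ (p - α)` times the average of `|f| ^ α` over `B(y, r)`, so it remains to show that
`y ↦ ⨍_{B(y,r)} g` has integral at most a constant times `∫ g`.

Since `d` need not be jointly measurable, Tonelli's theorem is replaced by a discretisation: a
countable dense set yields a disjoint cover of `X` by pieces `A n ⊆ B(e n, r / 2κ)`. On `A n` the
average over `B(y, r)` is dominated by the one over `B(e n, 2κr)`; and for each `x`, the balls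
`B(e n, 2κr)` containing `x` are comparable in measure to `B(x, 3κ²r)`, which contains their
pieces `A n` disjointly, so the total weight they give to `x` is bounded by doubling.
-/

open Function

theorem ENNReal.inv_le_mul_inv_of_le_mul {a b K : ℝ≥0∞} (hK0 : K ≠ 0) (hKt : K ≠ ∞)
    (h : b ≤ K * a) : a⁻¹ ≤ K * b⁻¹ :=
  calc a⁻¹ ≤ (K⁻¹ * b)⁻¹ := ENNReal.inv_le_inv.2 ((ENNReal.inv_mul_le_iff hK0 hKt).2 h)
    _ = K * b⁻¹ := by rw [ENNReal.mul_inv (by simp [hKt]) (by simp [hK0]), inv_inv]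

theorem qball_mono (d : X → X → ℝ) (x : X) {a b : ℝ} (h : a ≤ b) :
    qball d x a ⊆ qball d x b :=
  fun _ hy => lt_of_lt_of_le hy h

theorem qball_subset_qball {d : X → X → ℝ} {κ a b : ℝ} (hκ : 0 < κ)
    (htri : ∀ x y z, d x y ≤ κ * (d x z + d z y)) {x y : X} (hxy : d x y < a) :
    qball d y b ⊆ qball d x (κ * (a + b)) := fun w hw =>
  (htri x w y).trans_lt (mul_lt_mul_of_pos_left (add_lt_add hxy hw) hκ)

theorem measure_qball_le_pow_mul [MeasurableSpace X] {μ : Measure X} {d : X → X → ℝ}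
    {D : ℝ≥0∞} (hdouble : ∀ x r, 0 < r → μ (qball d x (2 * r)) ≤ D * μ (qball d x r))
    (x : X) {t R : ℝ} (ht : 0 < t) {m : ℕ} (hR : R ≤ 2 ^ m * t) :
    μ (qball d x R) ≤ D ^ m * μ (qball d x t) := by
  refine (measure_mono (qball_mono d x hR)).trans ?_
  clear hR
  induction m with
  | zero => simp
  | succ n ih =>
    calc μ (qball d x (2 ^ (n + 1) * t)) = μ (qball d x (2 * (2 ^ n * t))) := by ring_nf
      _ ≤ D * μ (qball d x (2 ^ n * t)) := hdouble x _ (by positivity)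
      _ ≤ D * (D ^ n * μ (qball d x t)) := by gcongr
      _ = D ^ (n + 1) * μ (qball d x t) := by ring

theorem exists_disjoint_cover_qball [MeasurableSpace X] [Nonempty X] {d : X → X → ℝ}
    (hsymm : ∀ x y, d x y = d y x) (hmeas : ∀ x r, MeasurableSet (qball d x r))
    (hsep : ∃ D : Set X, D.Countable ∧ ∀ x : X, ∀ ε : ℝ, 0 < ε → ∃ y ∈ D, d x y < ε)
    {s : ℝ} (hs : 0 < s) :
    ∃ (e : ℕ → X) (A : ℕ → Set X), Pairwise (Disjoint on A) ∧ (∀ n, MeasurableSet (A n)) ∧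
      (∀ n, A n ⊆ qball d (e n) s) ∧ ∀ y, ∃ n, y ∈ A n := by
  obtain ⟨D, hDc, hD⟩ := hsep
  have hDne : D.Nonempty :=
    let ⟨y, hy, _⟩ := hD (Classical.arbitrary X) 1 one_pos
    ⟨y, hy⟩
  obtain ⟨e, rfl⟩ := hDc.exists_eq_range hDne
  refine ⟨e, disjointed fun n => qball d (e n) s, disjoint_disjointed _,
    .disjointed fun n => hmeas _ _, disjointed_subset _, fun y => ?_⟩
  obtain ⟨_, ⟨n, rfl⟩, hyn⟩ := hD y s hs
  have hy : y ∈ ⋃ n, qball d (e n) s := mem_iUnion.2 ⟨n, show d (e n) y < s by rwa [hsymm]⟩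
  rwa [← iUnion_disjointed, mem_iUnion] at hy

theorem tsum_measure_mul_inv_le [MeasurableSpace X] {μ : Measure X} {ι : Type*} [Countable ι]
    {A : ι → Set X} {c : ι → ℝ≥0∞} {S : Set X} {K : ℝ≥0∞} (hK0 : K ≠ 0) (hKt : K ≠ ∞)
    (hA : Pairwise (Disjoint on A)) (hAm : ∀ i, MeasurableSet (A i)) (hAS : ∀ i, A i ⊆ S)
    (hc : ∀ i, μ S ≤ K * c i) (hS0 : μ S ≠ 0) (hSt : μ S ≠ ∞) :
    ∑' i, μ (A i) * (c i)⁻¹ ≤ K :=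
  calc ∑' i, μ (A i) * (c i)⁻¹ ≤ ∑' i, μ (A i) * (K * (μ S)⁻¹) := by
        gcongr with i; exact ENNReal.inv_le_mul_inv_of_le_mul hK0 hKt (hc i)
    _ = μ (⋃ i, A i) * (K * (μ S)⁻¹) := by rw [ENNReal.tsum_mul_right, measure_iUnion hA hAm]
    _ ≤ μ S * (K * (μ S)⁻¹) := by gcongr; exact iUnion_subset hAS
    _ = K := by rw [mul_left_comm, ENNReal.mul_inv_cancel hS0 hSt, mul_one]

theorem lintegral_inv_measure_mul_setLIntegral_le [MeasurableSpace X] {μ : Measure X}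
    {b S : X → Set X} {A B : ℕ → Set X} {K : ℝ≥0∞} (hK0 : K ≠ 0) (hKt : K ≠ ∞)
    (hA : Pairwise (Disjoint on A)) (hAm : ∀ n, MeasurableSet (A n))
    (hAcover : ∀ y, ∃ n, y ∈ A n) (hBm : ∀ n, MeasurableSet (B n))
    (hbB : ∀ n, ∀ y ∈ A n, b y ⊆ B n ∧ μ (B n) ≤ K * μ (b y))
    (hBS : ∀ n, ∀ x ∈ B n, A n ⊆ S x ∧ μ (S x) ≤ K * μ (B n))
    (hS0 : ∀ x, μ (S x) ≠ 0) (hSt : ∀ x, μ (S x) ≠ ∞) {g : X → ℝ≥0∞} (hg : Measurable g) :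
    ∫⁻ y, (μ (b y))⁻¹ * ∫⁻ x in b y, g x ∂μ ∂μ ≤ K * K * ∫⁻ x, g x ∂μ := by
  set c : ℕ → ℝ≥0∞ := fun n => μ (A n) * (μ (B n))⁻¹
  have hlocal : ∀ y, (μ (b y))⁻¹ * ∫⁻ x in b y, g x ∂μ ≤
      ∑' n, (A n).indicator (fun _ => K * ((μ (B n))⁻¹ * ∫⁻ x in B n, g x ∂μ)) y := by
    intro y
    obtain ⟨n, hn⟩ := hAcover y
    obtain ⟨hsub, hle⟩ := hbB n y hn
    calc (μ (b y))⁻¹ * ∫⁻ x in b y, g x ∂μ ≤ K * (μ (B n))⁻¹ * ∫⁻ x in B n, g x ∂μ :=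
          mul_le_mul' (ENNReal.inv_le_mul_inv_of_le_mul hK0 hKt hle) (lintegral_mono_set hsub)
      _ = _ := by rw [mul_assoc, indicator_of_mem hn]
      _ ≤ _ := ENNReal.le_tsum n
  have hmult : ∀ x, ∑' n, (B n).indicator (fun _ => c n) x ≤ K := fun x => by
    have hsub : ∀ n, (B n).indicator (fun _ => c n) x = {n | x ∈ B n}.indicator c n := fun n => by
      by_cases hx : x ∈ B n <;> simp [hx]
    simp_rw [hsub, ← tsum_subtype]
    exact tsum_measure_mul_inv_le hK0 hKt (hA.comp_of_injective Subtype.val_injective)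
      (fun n => hAm n) (fun n => (hBS n x n.2).1) (fun n => (hBS n x n.2).2) (hS0 x) (hSt x)
  have hterm : ∀ n, ∫⁻ y, (A n).indicator (fun _ => K * ((μ (B n))⁻¹ * ∫⁻ x in B n, g x ∂μ)) y ∂μ
      = K * ∫⁻ x, (B n).indicator (fun _ => c n) x * g x ∂μ := fun n => by
    simp_rw [← indicator_mul_left]
    rw [lintegral_indicator_const (hAm n), lintegral_indicator (hBm n),
      lintegral_const_mul _ hg]
    ring
  calc ∫⁻ y, (μ (b y))⁻¹ * ∫⁻ x in b y, g x ∂μ ∂μ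
      ≤ ∫⁻ y, ∑' n, (A n).indicator
          (fun _ => K * ((μ (B n))⁻¹ * ∫⁻ x in B n, g x ∂μ)) y ∂μ := lintegral_mono hlocal
    _ = K * ∫⁻ x, (∑' n, (B n).indicator (fun _ => c n) x) * g x ∂μ := by
      rw [lintegral_tsum fun n => (measurable_const.indicator (hAm n)).aemeasurable,
        tsum_congr hterm, ENNReal.tsum_mul_left]
      simp_rw [← ENNReal.tsum_mul_right]
      exact congrArg _ (lintegral_tsum fun n =>
        ((measurable_const.indicator (hBm n)).mul hg).aemeasurable).symm
    _ ≤ K * ∫⁻ x, K * g x ∂μ := by gcongr with x; exact hmult x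
    _ = K * K * ∫⁻ x, g x ∂μ := by rw [lintegral_const_mul _ hg, mul_assoc]

theorem lintegral_inv_measure_mul_setLIntegral_qball_le [MeasurableSpace X] {μ : Measure X}
    {d : X → X → ℝ} {κ : ℝ} {D : ℝ≥0∞} {m : ℕ} (hκ : 1 ≤ κ)
    (hsymm : ∀ x y, d x y = d y x) (htri : ∀ x y z, d x y ≤ κ * (d x z + d z y))
    (hmeas : ∀ x r, MeasurableSet (qball d x r))
    (hpos : ∀ x r, 0 < r → 0 < μ (qball d x r)) (hfin : ∀ x r, μ (qball d x r) < ∞)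
    (hsep : ∃ D : Set X, D.Countable ∧ ∀ x : X, ∀ ε : ℝ, 0 < ε → ∃ y ∈ D, d x y < ε)
    (hdouble : ∀ x r, 0 < r → μ (qball d x (2 * r)) ≤ D * μ (qball d x r))
    (hD0 : D ≠ 0) (hDt : D ≠ ∞) (hm : 4 * κ ^ 2 ≤ 2 ^ m)
    {g : X → ℝ≥0∞} (hg : Measurable g) {r : ℝ} (hr : 0 < r) :
    ∫⁻ y, (μ (qball d y r))⁻¹ * ∫⁻ x in qball d y r, g x ∂μ ∂μ ≤
      D ^ m * D ^ m * ∫⁻ x, g x ∂μ := by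
  cases isEmpty_or_nonempty X
  · simp [lintegral_of_isEmpty]
  have hκ0 : 0 < κ := one_pos.trans_le hκ
  have hκ2 : 1 ≤ κ ^ 2 := one_le_pow₀ hκ
  set s := r / (2 * κ)
  have hs : 0 < s := by positivity
  have hκs : κ * (s + s) = r := by simp only [s]; field_simp; ring
  obtain ⟨e, A, hA, hAm, hAs, hAcover⟩ := exists_disjoint_cover_qball hsymm hmeas hsep hs
  refine lintegral_inv_measure_mul_setLIntegral_le (b := fun y => qball d y r)
    (B := fun n => qball d (e n) (2 * κ * r)) (S := fun x => qball d x (3 * κ ^ 2 * r))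
    (pow_ne_zero m hD0) (pow_ne_top hDt) hA hAm hAcover (fun n => hmeas _ _) ?_ ?_
    (fun x => (hpos x _ (by positivity)).ne') (fun x => (hfin x _).ne) hg
  · intro n y hy
    have hny : d (e n) y < s := hAs n hy
    refine ⟨(qball_subset_qball hκ0 htri hny).trans (qball_mono d _ ?_), ?_⟩
    · nlinarith [div_le_self hr.le (by nlinarith : (1 : ℝ) ≤ 2 * κ)]
    calc μ (qball d (e n) (2 * κ * r)) ≤ D ^ m * μ (qball d (e n) s) :=
          measure_qball_le_pow_mul hdouble _ hs (by rw [← hκs]; nlinarith)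
      _ ≤ D ^ m * μ (qball d y r) := by
          gcongr
          rw [← hκs]
          exact qball_subset_qball hκ0 htri (by rwa [hsymm])
  · intro n x hx
    have hxn : d x (e n) < 2 * κ * r := by rw [hsymm]; exact hx
    refine ⟨(hAs n).trans ((qball_subset_qball hκ0 htri hxn).trans (qball_mono d _ ?_)), ?_⟩
    · nlinarith
    calc μ (qball d x (3 * κ ^ 2 * r))
        ≤ μ (qball d (e n) (κ * (2 * κ * r + 3 * κ ^ 2 * r))) :=
          measure_mono (qball_subset_qball hκ0 htri hx)
      _ ≤ D ^ m * μ (qball d (e n) (2 * κ * r)) :=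
          measure_qball_le_pow_mul hdouble _ (by positivity) (by
            have hc : κ + 3 / 2 * κ ^ 2 ≤ 2 ^ m := by nlinarith
            nlinarith [mul_le_mul_of_nonneg_right hc (by positivity : 0 ≤ 2 * κ * r)])

section Lebesgue

variable {E : Type*} [NormedAddCommGroup E] [MeasurableSpace X] {μ : Measure X}

theorem eLpNorm_rpow_toReal_eq_lintegral {α : ℝ≥0∞} (hα0 : α ≠ 0) (hαt : α ≠ ∞) (f : X → E) :
    eLpNorm f α μ ^ α.toReal = ∫⁻ x, ‖f x‖ₑ ^ α.toReal ∂μ := by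
  rw [eLpNorm_eq_eLpNorm' hα0 hαt,
    lintegral_rpow_enorm_eq_rpow_eLpNorm' (ENNReal.toReal_pos hα0 hαt)]

theorem measure_rpow_mul_eLpNorm_indicator_le {q α : ℝ≥0∞} (hqα : q ≤ α) {B : Set X}
    (hB : MeasurableSet B) (hB0 : μ B ≠ 0) (hBt : μ B ≠ ∞) {f : X → E}
    (hf : AEStronglyMeasurable f μ) :
    μ B ^ (1 / α.toReal - 1 / q.toReal) * eLpNorm (B.indicator f) q μ ≤
      eLpNorm (B.indicator f) α μ := by
  have hHolder :=
    eLpNorm_le_eLpNorm_mul_rpow_measure_univ (μ := μ.restrict B) hqα hf.restrict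
  rw [Measure.restrict_apply_univ, ← eLpNorm_indicator_eq_eLpNorm_restrict hB,
    ← eLpNorm_indicator_eq_eLpNorm_restrict hB] at hHolder
  calc μ B ^ (1 / α.toReal - 1 / q.toReal) * eLpNorm (B.indicator f) q μ
      ≤ μ B ^ (1 / α.toReal - 1 / q.toReal) *
          (eLpNorm (B.indicator f) α μ * μ B ^ (1 / q.toReal - 1 / α.toReal)) := by gcongr
    _ = eLpNorm (B.indicator f) α μ *
          μ B ^ ((1 / α.toReal - 1 / q.toReal) + (1 / q.toReal - 1 / α.toReal)) := by
      rw [ENNReal.rpow_add _ _ hB0 hBt]; ring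
    _ = eLpNorm (B.indicator f) α μ := by simp

theorem rpow_measure_mul_eLpNorm_indicator_rpow_le {q p α : ℝ≥0∞} (hqα : q ≤ α) (hαp : α ≤ p)
    (hα0 : α ≠ 0) (hp : p ≠ ∞) {B : Set X} (hB : MeasurableSet B) (hB0 : μ B ≠ 0)
    (hBt : μ B ≠ ∞) {f : X → E} (hf : AEStronglyMeasurable f μ) :
    (μ B ^ (1 / α.toReal - 1 / p.toReal - 1 / q.toReal) * eLpNorm (B.indicator f) q μ)
        ^ p.toReal ≤
      eLpNorm f α μ ^ (p.toReal - α.toReal) * ((μ B)⁻¹ * ∫⁻ x in B, ‖f x‖ₑ ^ α.toReal ∂μ) := by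
  have hαt : α ≠ ∞ := ne_top_of_le_ne_top hp hαp
  have hα : 0 < α.toReal := ENNReal.toReal_pos hα0 hαt
  have hαp' : α.toReal ≤ p.toReal := ENNReal.toReal_mono hp hαp
  have hp0 : 0 < p.toReal := hα.trans_le hαp'
  set a := eLpNorm (B.indicator f) α μ
  have hsplit : μ B ^ (1 / α.toReal - 1 / p.toReal - 1 / q.toReal) =
      μ B ^ (-(1 / p.toReal)) * μ B ^ (1 / α.toReal - 1 / q.toReal) := by
    rw [← ENNReal.rpow_add _ _ hB0 hBt]; ring_nf
  calc (μ B ^ (1 / α.toReal - 1 / p.toReal - 1 / q.toReal) * eLpNorm (B.indicator f) q μ)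
        ^ p.toReal
      ≤ (μ B ^ (-(1 / p.toReal)) * a) ^ p.toReal := by
        rw [hsplit, mul_assoc]
        gcongr
        exact measure_rpow_mul_eLpNorm_indicator_le hqα hB hB0 hBt hf
    _ = (μ B)⁻¹ * (a ^ (p.toReal - α.toReal) * a ^ α.toReal) := by
        rw [ENNReal.mul_rpow_of_nonneg _ _ hp0.le, ← ENNReal.rpow_mul,
          ← ENNReal.rpow_add_of_nonneg _ _ (sub_nonneg.2 hαp') hα.le, neg_mul,
          one_div_mul_cancel hp0.ne', ENNReal.rpow_neg_one, sub_add_cancel]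
    _ ≤ (μ B)⁻¹ * (eLpNorm f α μ ^ (p.toReal - α.toReal) * a ^ α.toReal) := by
        gcongr
        exact eLpNorm_indicator_le f
    _ = eLpNorm f α μ ^ (p.toReal - α.toReal) *
          ((μ B)⁻¹ * ∫⁻ x in B, ‖f x‖ₑ ^ α.toReal ∂μ) := by
        rw [← eLpNorm_rpow_toReal_eq_lintegral hα0 hαt, ← eLpNorm_indicator_eq_eLpNorm_restrict hB]
        ring

end Lebesgue

section Amalgam

variable [MeasurableSpace X] {μ : Measure X} {d : X → X → ℝ} {q p α : ℝ≥0∞} {r : ℝ}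
  {f : X → ℂ}

theorem amalgamNorm_top_le (hqα : q ≤ α) (hmeas : ∀ y, MeasurableSet (qball d y r))
    (hpos : ∀ y, μ (qball d y r) ≠ 0) (hfin : ∀ y, μ (qball d y r) ≠ ∞)
    (hf : AEStronglyMeasurable f μ) :
    amalgamNorm μ d q ∞ α r f ≤ eLpNorm f α μ := by
  rw [amalgamNorm, if_pos rfl]
  exact iSup_le fun y => (measure_rpow_mul_eLpNorm_indicator_le hqα (hmeas y) (hpos y) (hfin y)
    hf).trans (eLpNorm_indicator_le f)

theorem amalgamNorm_le_of_ne_top (hp : p ≠ ∞) (hα0 : α ≠ 0) (hqα : q ≤ α) (hαp : α ≤ p)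
    (hmeas : ∀ y, MeasurableSet (qball d y r)) (hpos : ∀ y, μ (qball d y r) ≠ 0)
    (hfin : ∀ y, μ (qball d y r) ≠ ∞) {L : ℝ≥0∞}
    (havg : ∫⁻ y, (μ (qball d y r))⁻¹ * ∫⁻ x in qball d y r, ‖f x‖ₑ ^ α.toReal ∂μ ∂μ ≤
      L * ∫⁻ x, ‖f x‖ₑ ^ α.toReal ∂μ)
    (hf : AEStronglyMeasurable f μ) (hfα : eLpNorm f α μ ≠ ∞) :
    amalgamNorm μ d q p α r f ≤ L ^ (1 / p.toReal) * eLpNorm f α μ := by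
  have hαt : α ≠ ∞ := ne_top_of_le_ne_top hp hαp
  have hα : 0 < α.toReal := ENNReal.toReal_pos hα0 hαt
  have hαp' : α.toReal ≤ p.toReal := ENNReal.toReal_mono hp hαp
  have hp0 : 0 < p.toReal := hα.trans_le hαp'
  set M := eLpNorm f α μ
  rw [amalgamNorm, if_neg hp]
  calc (∫⁻ y, (μ (qball d y r) ^ (1 / α.toReal - 1 / p.toReal - 1 / q.toReal) *
        eLpNorm ((qball d y r).indicator f) q μ) ^ p.toReal ∂μ) ^ (1 / p.toReal)
      ≤ (M ^ (p.toReal - α.toReal) * (L * M ^ α.toReal)) ^ (1 / p.toReal) := by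
        gcongr
        calc _ ≤ ∫⁻ y, M ^ (p.toReal - α.toReal) *
              ((μ (qball d y r))⁻¹ * ∫⁻ x in qball d y r, ‖f x‖ₑ ^ α.toReal ∂μ) ∂μ :=
              lintegral_mono fun y => rpow_measure_mul_eLpNorm_indicator_rpow_le hqα hαp hα0 hp
                (hmeas y) (hpos y) (hfin y) hf
          _ = M ^ (p.toReal - α.toReal) * ∫⁻ y, (μ (qball d y r))⁻¹ *
              ∫⁻ x in qball d y r, ‖f x‖ₑ ^ α.toReal ∂μ ∂μ :=
              lintegral_const_mul' _ _ (ENNReal.rpow_ne_top_of_nonneg (sub_nonneg.2 hαp') hfα)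
          _ ≤ M ^ (p.toReal - α.toReal) * (L * M ^ α.toReal) := by
              rw [eLpNorm_rpow_toReal_eq_lintegral hα0 hαt]
              gcongr
    _ = L ^ (1 / p.toReal) * M := by
        rw [mul_left_comm, ← ENNReal.rpow_add_of_nonneg _ _ (sub_nonneg.2 hαp') hα.le,
          sub_add_cancel, ENNReal.mul_rpow_of_nonneg _ _ (by positivity), ← ENNReal.rpow_mul,
          mul_one_div_cancel hp0.ne', ENNReal.rpow_one]

theorem amalgamNorm_le (hq : 1 ≤ q) (hqα : q ≤ α) (hαp : α ≤ p)
    (hmeas : ∀ y, MeasurableSet (qball d y r)) (hpos : ∀ y, μ (qball d y r) ≠ 0)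
    (hfin : ∀ y, μ (qball d y r) ≠ ∞) {L : ℝ≥0∞} (hL : 1 ≤ L)
    (havg : ∫⁻ y, (μ (qball d y r))⁻¹ * ∫⁻ x in qball d y r, ‖f x‖ₑ ^ α.toReal ∂μ ∂μ ≤
      L * ∫⁻ x, ‖f x‖ₑ ^ α.toReal ∂μ)
    (hf : AEStronglyMeasurable f μ) :
    amalgamNorm μ d q p α r f ≤ L * eLpNorm f α μ := by
  obtain rfl | hp := eq_or_ne p ∞
  · exact (amalgamNorm_top_le hqα hmeas hpos hfin hf).trans (le_mul_of_one_le_left' hL)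
  obtain hfα | hfα := eq_or_ne (eLpNorm f α μ) ∞
  · rw [hfα, ENNReal.mul_top (one_pos.trans_le hL).ne']
    exact le_top
  have h1p : 1 ≤ p.toReal := by
    simpa using ENNReal.toReal_mono hp (hq.trans (hqα.trans hαp))
  calc amalgamNorm μ d q p α r f ≤ L ^ (1 / p.toReal) * eLpNorm f α μ :=
        amalgamNorm_le_of_ne_top hp (one_pos.trans_le (hq.trans hqα)).ne' hqα hαp hmeas hpos
          hfin havg hf hfα
    _ ≤ L * eLpNorm f α μ := by
        gcongr
        exact (ENNReal.rpow_le_rpow_of_exponent_le hL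
          ((div_le_one (by positivity)).2 h1p)).trans_eq (ENNReal.rpow_one L)

end Amalgam

theorem lebesgue_embeds_amalgam_general [MeasurableSpace X] (μ : Measure X) (d : X → X → ℝ)
    (κ : ℝ) (hκ : 1 ≤ κ)
    (hsymm : ∀ x y, d x y = d y x)
    (htri : ∀ x y z, d x y ≤ κ * (d x z + d z y))
    (hmeas : ∀ x r, MeasurableSet (qball d x r))
    (hpos : ∀ x r, 0 < r → 0 < μ (qball d x r))
    (hfin : ∀ x r, μ (qball d x r) < ∞)
    (hsep : ∃ D : Set X, D.Countable ∧ ∀ x : X, ∀ ε : ℝ, 0 < ε → ∃ y ∈ D, d x y < ε)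
    (C' : ℝ) (hC' : 1 < C')
    (hdouble : ∀ x r, 0 < r → μ (qball d x (2 * r)) ≤ ENNReal.ofReal C' * μ (qball d x r))
    (q p α : ℝ≥0∞) (hq : 1 ≤ q) (hqα : q ≤ α) (hαp : α ≤ p) :
    ∃ C : ℝ, 0 < C ∧
      (∀ (r : ℝ), 0 < r → ∀ (f : X → ℂ), Measurable f →
        amalgamNorm μ d q p α r f ≤ ENNReal.ofReal C * eLpNorm f α μ) ∧
      (∀ (f : X → ℂ), Measurable f →
        (⨆ (r : ℝ) (_ : 0 < r), amalgamNorm μ d q p α r f) ≤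
          ENNReal.ofReal C * eLpNorm f α μ) := by
  obtain ⟨m, hm⟩ := pow_unbounded_of_one_lt (4 * κ ^ 2) (one_lt_two (α := ℝ))
  have hD1 : 1 ≤ ENNReal.ofReal C' := ENNReal.one_le_ofReal.2 hC'.le
  have hC : ENNReal.ofReal (C' ^ (2 * m)) = ENNReal.ofReal C' ^ m * ENNReal.ofReal C' ^ m := by
    rw [ENNReal.ofReal_pow (by linarith), two_mul, pow_add]
  have hbound : ∀ r, 0 < r → ∀ f : X → ℂ, Measurable f →
      amalgamNorm μ d q p α r f ≤ ENNReal.ofReal (C' ^ (2 * m)) * eLpNorm f α μ := by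
    intro r hr f hf
    rw [hC]
    exact amalgamNorm_le hq hqα hαp (fun y => hmeas y r) (fun y => (hpos y r hr).ne')
      (fun y => (hfin y r).ne) (one_le_mul (one_le_pow₀ hD1) (one_le_pow₀ hD1))
      (lintegral_inv_measure_mul_setLIntegral_qball_le hκ hsymm htri hmeas hpos hfin hsep
        hdouble (one_pos.trans_le hD1).ne' ofReal_ne_top hm.le (hf.enorm.pow_const _) hr)
      hf.aestronglyMeasurable
  exact ⟨C' ^ (2 * m), by positivity, hbound, fun f hf => iSup₂_le fun r hr => hbound r hr f hf⟩

/-- `L^α(X)` embeds continuously into `(L^q,L^p)^α(X)`. -/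
theorem lebesgue_embeds_amalgam [MeasurableSpace X] (μ : Measure X) (d : X → X → ℝ)
    (κ : ℝ) (hκ : 1 ≤ κ)
    (hsymm : ∀ x y, d x y = d y x) (hd0 : ∀ x, d x x = 0) (hdnn : ∀ x y, 0 ≤ d x y)
    (htri : ∀ x y z, d x y ≤ κ * (d x z + d z y))
    (hmeas : ∀ x r, MeasurableSet (qball d x r))
    (hpos : ∀ x r, 0 < r → 0 < μ (qball d x r))
    (hfin : ∀ x r, μ (qball d x r) < ∞)
    (hXinf : μ Set.univ = ∞)
    (hsep : ∃ D : Set X, D.Countable ∧ ∀ x : X, ∀ ε : ℝ, 0 < ε → ∃ y ∈ D, d x y < ε)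
    (hann : ∀ x r R, 0 < r → r < R → (qball d x R \ qball d x r).Nonempty)
    (C' : ℝ) (hC' : 1 < C')
    (hdouble : ∀ x r, 0 < r → μ (qball d x (2 * r)) ≤ ENNReal.ofReal C' * μ (qball d x r))
    (q p α : ℝ≥0∞) (hq : 1 ≤ q) (hqα : q ≤ α) (hαp : α ≤ p) :
    ∃ C : ℝ, 0 < C ∧
      (∀ (r : ℝ), 0 < r → ∀ (f : X → ℂ), Measurable f →
        amalgamNorm μ d q p α r f ≤ ENNReal.ofReal C * eLpNorm f α μ) ∧
      (∀ (f : X → ℂ), Measurable f →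
        (⨆ (r : ℝ) (_ : 0 < r), amalgamNorm μ d q p α r f) ≤
          ENNReal.ofReal C * eLpNorm f α μ) :=
  lebesgue_embeds_amalgam_general μ d κ hκ hsymm htri hmeas hpos hfin hsep C' hC' hdouble q p α hq
    hqα hαp
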